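/- arXiv:2109.11852 — 2 statements merged into one kernel-verified Lean document; each statement's English description precedes it below -/
import Mathlib

section
/- For k ∈ ℤ and μ ∈ ℝ define λ_k^±(μ) = i(k + μ ∓ √|k+μ|). If μ ∈ (0, 1/4), then for all (k,σ) ≠ (k',σ') in ℤ × {+,-} with (k,σ),(k',σ') ∉ {(1,+),(-1,-),(0,+),(0,-)}, and also between any eigenvalue indexed in that exceptional set and any outside it, one has λ_k^σ(μ) ≠ λ_{k'}^{σ'}(μ), except possibly collisions among the four exceptional eigenvalues themselves. Moreover, λ_k^σ(0) = 0 exactly for (k,σ) ∈ {(1,+),(-1,-),(0,+),(0,-)}, and |λ_k^σ(0)| ≥ 2 - √2 for all other (k,σ). -/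
/-!
Write `x = k + μ` and `a = √|x|`, so that the eigenvalue is `i (x ∓ a)`. If two eigenvalues
coincide at points `x, y` differing by an integer `n`, then `n = ±a ∓ b`. When `x, y` have the
same sign, also `a² - b² = ±n`, and squaring the first relation makes it linear in `b`: `2b` is an
integer (or `n = 0`, `x = y` and `a = 0`). When they have opposite signs, `a² + b² = n ≤ a + b`
forces `n ≤ 2` and then `b ∈ {0, 1}`. Either way `4|x|` or `4|y|` is an integer, which is
impossible when `4μ ∉ ℤ`; so for `μ ∈ (0, 1/4)` the eigenvalues are in fact pairwise distinct.
At `μ = 0` the modulus is at least `|k| - √|k| ≥ 2 - √2` once `|k| ≥ 2`, and `|k| ≤ 1` is checked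
by hand.
-/

lemma four_mul_sq_eq_of_sq_sub_sq_eq {a b s s' ε n : ℝ} (hs : s ^ 2 = 1) (hs' : s' ^ 2 = 1)
    (hn : n ≠ 0) (hsq : a ^ 2 - b ^ 2 = ε * n) (hlin : s * a - s' * b = n) :
    4 * b ^ 2 = (ε - n) ^ 2 := by
  have h2b : 2 * b = s' * (ε - n) := by
    -- squaring `s a = n + s' b` gives `a² - b² = n² + 2 n s' b`
    refine mul_left_cancel₀ hn ?_
    linear_combination s' * hsq - s' * (s * a + s' * b + n) * hlin + s' * a ^ 2 * hs
      - (2 * n * b + s' * b ^ 2) * hs'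
  linear_combination (2 * b + s' * (ε - n)) * h2b + (ε - n) ^ 2 * hs'

lemma eq_zero_or_eq_one_of_sq_add_sq_eq {a b s s' : ℝ} {n : ℤ} (ha : 0 ≤ a) (hb : 0 ≤ b)
    (hs : s ^ 2 = 1) (hs' : s' ^ 2 = 1) (hsq : a ^ 2 + b ^ 2 = n) (hlin : s * a - s' * b = n) :
    b = 0 ∨ b = 1 := by
  have hsa : s * a ≤ a := by nlinarith [sq_nonneg (s - 1)]
  have hsb : -(s' * b) ≤ b := by nlinarith [sq_nonneg (s' + 1)]
  have hn0 : 0 ≤ n := by exact_mod_cast hsq ▸ (by positivity : (0 : ℝ) ≤ a ^ 2 + b ^ 2)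
  have hn2 : n ≤ 2 := by
    have : (n : ℝ) ≤ 2 := by nlinarith [sq_nonneg (a - b)]
    exact_mod_cast this
  interval_cases n <;> push_cast at hsq hlin
  · left; nlinarith
  · -- `(s a - s' b)² = a² + b²` kills the cross term
    have hss' : s * s' * (a * b) = 0 := by
      linear_combination (1/2) * hsq + (1/2) * a ^ 2 * hs + (1/2) * b ^ 2 * hs'
        - (1/2) * (s * a - s' * b + 1) * hlin
    rcases mul_eq_zero.1 hss' with h | h
    · exfalso; rcases mul_eq_zero.1 h with h | h <;> simp [h] at hs hs'
    rcases mul_eq_zero.1 h with h | h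
    · right; subst h; nlinarith
    · left; exact h
  · right; nlinarith [sq_nonneg (a - 1), sq_nonneg (b - 1)]

/-- `λ_k^σ(μ) = i · branchValue σ (k + μ)`. -/
noncomputable def branchValue (σ : Bool) (x : ℝ) : ℝ := x - (if σ then 1 else -1) * √|x|

lemma sq_ite_one_neg_one (σ : Bool) : (if σ then (1 : ℝ) else -1) ^ 2 = 1 := by
  cases σ <;> norm_num

theorem exists_int_four_mul_abs_of_branchValue_eq {x y : ℝ} {n : ℤ} {σ σ' : Bool}
    (hxy : x - y = n) (hne : (x, σ) ≠ (y, σ')) (heq : branchValue σ x = branchValue σ' y) :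
    (∃ m : ℤ, 4 * |x| = m) ∨ ∃ m : ℤ, 4 * |y| = m := by
  wlog hyx : y ≤ x generalizing x y n σ σ'
  · exact (this (n := -n) (by push_cast; linarith) hne.symm heq.symm (by linarith)).symm
  set s : ℝ := if σ then 1 else -1
  set s' : ℝ := if σ' then 1 else -1
  have hs : s ^ 2 = 1 := sq_ite_one_neg_one σ
  have hs' : s' ^ 2 = 1 := sq_ite_one_neg_one σ'
  set a := √|x|
  set b := √|y|
  have ha : a ^ 2 = |x| := Real.sq_sqrt (abs_nonneg x)
  have hb : b ^ 2 = |y| := Real.sq_sqrt (abs_nonneg y)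
  have hlin : s * a - s' * b = n := by unfold branchValue at heq; linarith
  rcases eq_or_ne n 0 with rfl | hn
  · obtain rfl : x = y := by push_cast at hxy; linarith
    have hσ : σ ≠ σ' := fun h => hne (by rw [h])
    have ha0 : a = 0 := by
      cases σ <;> cases σ' <;> simp only [ne_eq, not_true_eq_false] at hσ <;>
        simp [s, s'] at hlin <;> linarith
    exact .inl ⟨0, by rw [← ha, ha0]; simp⟩
  have hn' : (n : ℝ) ≠ 0 := Int.cast_ne_zero.2 hn
  obtain hy | hy := le_total 0 y
  · have hx := hy.trans hyx
    refine .inr ⟨(1 - n) ^ 2, ?_⟩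
    push_cast
    rw [← hb]
    exact four_mul_sq_eq_of_sq_sub_sq_eq hs hs' hn'
      (by rw [ha, hb, abs_of_nonneg hy, abs_of_nonneg hx]; linarith) hlin
  obtain hx | hx := le_total x 0
  · refine .inr ⟨(-1 - n) ^ 2, ?_⟩
    push_cast
    rw [← hb]
    exact four_mul_sq_eq_of_sq_sub_sq_eq hs hs' hn'
      (by rw [ha, hb, abs_of_nonpos hy, abs_of_nonpos hx]; linarith) hlin
  · obtain hb' | hb' := eq_zero_or_eq_one_of_sq_add_sq_eq (a := a) (b := b)
      (Real.sqrt_nonneg _) (Real.sqrt_nonneg _) hs hs'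
      (by rw [ha, hb, abs_of_nonpos hy, abs_of_nonneg hx]; linarith) hlin
    · exact .inr ⟨0, by rw [← hb, hb']; simp⟩
    · exact .inr ⟨4, by rw [← hb, hb']; simp⟩

lemma four_mul_abs_intCast_add_ne_intCast {μ : ℝ} (hμ : ∀ j : ℤ, (j : ℝ) ≠ 4 * μ) (k m : ℤ) :
    4 * |(k : ℝ) + μ| ≠ m := by
  intro h
  rcases abs_choice ((k : ℝ) + μ) with h' | h' <;> rw [h'] at h
  · exact hμ (m - 4 * k) (by push_cast; linarith)
  · exact hμ (-m - 4 * k) (by push_cast; linarith)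

theorem branchValue_intCast_add_injective {μ : ℝ} (hμ : ∀ j : ℤ, (j : ℝ) ≠ 4 * μ) :
    Function.Injective fun p : ℤ × Bool => branchValue p.2 (p.1 + μ) := by
  rintro ⟨k, σ⟩ ⟨k', σ'⟩ heq
  by_contra hne
  have hne' : ((k : ℝ) + μ, σ) ≠ ((k' : ℝ) + μ, σ') := by
    simpa only [ne_eq, Prod.mk.injEq, add_left_inj, Int.cast_inj] using hne
  obtain ⟨m, hm⟩ | ⟨m, hm⟩ := exists_int_four_mul_abs_of_branchValue_eq (n := k - k')
    (by push_cast; ring) hne' heq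
  · exact four_mul_abs_intCast_add_ne_intCast hμ k m hm
  · exact four_mul_abs_intCast_add_ne_intCast hμ k' m hm

lemma intCast_ne_four_mul_of_mem_Ioo {μ : ℝ} (hμ : μ ∈ Set.Ioo 0 (1 / 4)) (j : ℤ) :
    (j : ℝ) ≠ 4 * μ := by
  intro h
  have h0 : 0 < j := by exact_mod_cast (by linarith [hμ.1] : (0 : ℝ) < j)
  have h1 : j < 1 := by exact_mod_cast (by linarith [hμ.2] : (j : ℝ) < 1)
  omega

def exceptionalIndices : Set (ℤ × Bool) := {(1, true), (-1, false), (0, true), (0, false)}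

lemma branchValue_intCast_eq_zero_of_mem {k : ℤ} {σ : Bool} (h : (k, σ) ∈ exceptionalIndices) :
    branchValue σ k = 0 := by
  rcases h with h | h | h | h <;> simp_all [branchValue]

lemma abs_sub_sqrt_abs_le_abs_branchValue (σ : Bool) (x : ℝ) : |x| - √|x| ≤ |branchValue σ x| :=
  calc |x| - √|x| = |x| - |(if σ then 1 else -1) * √(|x|)| := by
        cases σ <;> simp [abs_of_nonneg (Real.sqrt_nonneg _)]
    _ ≤ |branchValue σ x| := abs_sub_abs_le_abs_sub _ _

lemma two_sub_sqrt_two_le_sub_sqrt {t : ℝ} (ht : 2 ≤ t) : 2 - √2 ≤ t - √t := by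
  have hle : √2 ≤ √t := Real.sqrt_le_sqrt ht
  have h2 : √2 ^ 2 = 2 := Real.sq_sqrt (by norm_num)
  have ht' : √t ^ 2 = t := Real.sq_sqrt (by linarith)
  have h1 : 1 ≤ √2 := by nlinarith [Real.sqrt_nonneg 2]
  nlinarith [mul_nonneg (sub_nonneg.2 hle) (by linarith : 0 ≤ √t + √2 - 1)]

lemma two_sub_sqrt_two_le_abs_branchValue_intCast {k : ℤ} {σ : Bool}
    (h : (k, σ) ∉ exceptionalIndices) : 2 - √2 ≤ |branchValue σ k| := by
  obtain hk | hk := le_or_gt 2 |k|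
  · calc 2 - √2 ≤ |(k : ℝ)| - √|(k : ℝ)| :=
          two_sub_sqrt_two_le_sub_sqrt (by rw [← Int.cast_abs]; exact_mod_cast hk)
      _ ≤ |branchValue σ k| := abs_sub_sqrt_abs_le_abs_branchValue σ k
  · have : 2 - √2 ≤ 2 := by linarith [Real.sqrt_nonneg 2]
    obtain rfl | rfl | rfl : k = -1 ∨ k = 0 ∨ k = 1 := by rw [abs_lt] at hk; omega
    all_goals cases σ <;> simp_all [exceptionalIndices, branchValue] <;> norm_num

/-- Separation of the eigenvalues λ_k^±(μ) = i(k+μ ∓ √|k+μ|): for μ ∈ (0,1/4)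
no collisions occur except possibly among the four exceptional eigenvalues
indexed by Σ = {(1,+),(-1,-),(0,+),(0,-)}; at μ = 0 exactly the exceptional
ones vanish and all the others have modulus at least 2 - √2.
Here `true` stands for the sign + and `false` for -. -/
theorem eigenvalue_separation
    (lam : ℤ → Bool → ℝ → ℂ)
    (hlam : ∀ (k : ℤ) (σ : Bool) (μ : ℝ), lam k σ μ =
      Complex.I * ((((k : ℝ) + μ - (if σ then 1 else -1) * Real.sqrt |(k : ℝ) + μ|) : ℝ) : ℂ))
    (S : Set (ℤ × Bool))
    (hS : S = {(1, true), (-1, false), (0, true), (0, false)}) :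
    (∀ μ : ℝ, μ ∈ Set.Ioo (0 : ℝ) (1/4) → ∀ (k k' : ℤ) (σ σ' : Bool),
      (k, σ) ≠ (k', σ') → ¬((k, σ) ∈ S ∧ (k', σ') ∈ S) →
      lam k σ μ ≠ lam k' σ' μ) ∧
    (∀ (k : ℤ) (σ : Bool), lam k σ 0 = 0 ↔ (k, σ) ∈ S) ∧
    (∀ (k : ℤ) (σ : Bool), (k, σ) ∉ S → 2 - Real.sqrt 2 ≤ ‖lam k σ 0‖) := by
  subst hS
  have hlam' : ∀ k σ μ, lam k σ μ = Complex.I * (branchValue σ (k + μ) : ℂ) := hlam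
  refine ⟨fun μ hμ k k' σ σ' hne _ heq => ?_, fun k σ => ?_, fun k σ hkσ => ?_⟩
  · rw [hlam', hlam', mul_right_inj' Complex.I_ne_zero, Complex.ofReal_inj] at heq
    exact hne (branchValue_intCast_add_injective (intCast_ne_four_mul_of_mem_Ioo hμ) heq)
  · rw [hlam', add_zero, mul_eq_zero, Complex.ofReal_eq_zero, or_iff_right Complex.I_ne_zero]
    refine ⟨fun h0 => ?_, branchValue_intCast_eq_zero_of_mem⟩
    by_contra hkσ
    have hbound := two_sub_sqrt_two_le_abs_branchValue_intCast hkσ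
    have hsqrt : √2 < 2 := by rw [Real.sqrt_lt' two_pos]; norm_num
    rw [h0, abs_zero] at hbound
    linarith
  · rw [hlam', add_zero, norm_mul, Complex.norm_I, one_mul, Complex.norm_real, Real.norm_eq_abs]
    exact two_sub_sqrt_two_le_abs_branchValue_intCast hkσ
end

section
/- Let P and Q be bounded projections on a Banach space (P² = P, Q² = Q) with ‖Q - P‖ < 1, and define R = (Q-P)², U' = QP + (Id - Q)(Id - P). Then Id - R is invertible, and with (Id - R)^{-1/2} defined by the binomial power series, U := (Id - R)^{-1/2} U' is invertible with inverse U^{-1} = (PQ + (Id-P)(Id-Q))(Id - R)^{-1/2}, and U P U^{-1} = Q. -/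
set_option linter.unusedSectionVars false

noncomputable def katoC (k : ℕ) : ℝ :=
  (∏ i ∈ Finset.range k, ((-(1 : ℝ)/2) - (i : ℝ))) / (k.factorial : ℝ)

lemma katoC_zero : katoC 0 = 1 := by simp [katoC]

lemma katoC_succ (k : ℕ) : ((k : ℝ) + 1) * katoC (k+1) = ((-(1:ℝ)/2) - k) * katoC k := by
  have h1 : ((k.factorial : ℝ)) ≠ 0 := Nat.cast_ne_zero.2 k.factorial_ne_zero
  have hk1 : ((k : ℝ) + 1) ≠ 0 := by positivity
  simp only [katoC, Finset.prod_range_succ, Nat.factorial_succ, Nat.cast_mul, Nat.cast_add,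
    Nat.cast_one]
  field_simp

lemma abs_katoC_le_one (k : ℕ) : |katoC k| ≤ 1 := by
  induction k with
  | zero => simp [katoC_zero]
  | succ n ih =>
    have hk1 : (0:ℝ) < (n : ℝ) + 1 := by positivity
    have h := katoC_succ n
    have heq : katoC (n+1) = ((-(1:ℝ)/2) - n) / ((n:ℝ)+1) * katoC n := by
      field_simp
      linarith [h]
    rw [heq, abs_mul, abs_div]
    have h1 : |(-(1:ℝ)/2) - (n:ℝ)| = (n:ℝ) + 1/2 := by
      rw [abs_of_nonpos (by nlinarith [Nat.cast_nonneg (α := ℝ) n])]; ring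
    have h2 : |(n:ℝ)+1| = (n:ℝ)+1 := abs_of_pos hk1
    rw [h1, h2]
    have h3 : ((n:ℝ)+1/2)/((n:ℝ)+1) ≤ 1 := by rw [div_le_one hk1]; linarith
    nlinarith [abs_nonneg (katoC n)]

noncomputable def katoA (n : ℕ) : ℝ := ∑ k ∈ Finset.range (n+1), katoC k * katoC (n-k)

lemma katoA_zero : katoA 0 = 1 := by simp [katoA, katoC_zero]

lemma kato_twoS (n : ℕ) :
    (∑ k ∈ Finset.range (n+1), (k:ℝ) * (katoC k * katoC (n-k))) * 2 = n * katoA n := by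
  have h := Finset.sum_range_reflect (fun k => (k:ℝ) * (katoC k * katoC (n-k))) (n+1)
  simp only [add_tsub_cancel_right] at h
  have h2 : ∑ j ∈ Finset.range (n+1), ((n - j : ℕ):ℝ) * (katoC (n-j) * katoC (n-(n-j)))
      = ∑ j ∈ Finset.range (n+1), ((n - j : ℕ):ℝ) * (katoC j * katoC (n-j)) := by
    apply Finset.sum_congr rfl
    intro j hj
    have hjn : j ≤ n := Nat.lt_succ_iff.mp (Finset.mem_range.mp hj)
    rw [Nat.sub_sub_self hjn, mul_comm (katoC (n-j)) (katoC j)]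
  have hS : (∑ k ∈ Finset.range (n+1), (k:ℝ) * (katoC k * katoC (n-k)))
      = ∑ j ∈ Finset.range (n+1), ((n - j : ℕ):ℝ) * (katoC j * katoC (n-j)) := by
    rw [← h, h2]
  calc (∑ k ∈ Finset.range (n+1), (k:ℝ) * (katoC k * katoC (n-k))) * 2
      = (∑ k ∈ Finset.range (n+1), (k:ℝ) * (katoC k * katoC (n-k)))
        + ∑ j ∈ Finset.range (n+1), ((n - j : ℕ):ℝ) * (katoC j * katoC (n-j)) := by
        rw [← hS]; ring
    _ = ∑ k ∈ Finset.range (n+1), ((k:ℝ) + ((n-k : ℕ):ℝ)) * (katoC k * katoC (n-k)) := by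
        rw [← Finset.sum_add_distrib]
        exact Finset.sum_congr rfl (fun k _ => by ring)
    _ = ∑ k ∈ Finset.range (n+1), (n:ℝ) * (katoC k * katoC (n-k)) := by
        apply Finset.sum_congr rfl
        intro k hk
        have hkn : k ≤ n := Nat.lt_succ_iff.mp (Finset.mem_range.mp hk)
        rw [Nat.cast_sub hkn]; ring
    _ = n * katoA n := by rw [katoA, Finset.mul_sum]

lemma katoA_succ (n : ℕ) : katoA (n+1) = - katoA n := by
  have t1 := kato_twoS (n+1)
  have t0 := kato_twoS n
  have e1 : ∑ k ∈ Finset.range (n+1+1), (k:ℝ) * (katoC k * katoC (n+1-k))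
      = ∑ i ∈ Finset.range (n+1), ((-(1:ℝ)/2) - i) * (katoC i * katoC (n-i)) := by
    rw [Finset.sum_range_succ' (fun k => (k:ℝ) * (katoC k * katoC (n+1-k))) (n+1)]
    simp only [Nat.cast_zero, zero_mul, add_zero, Nat.succ_sub_succ, Nat.cast_add, Nat.cast_one]
    apply Finset.sum_congr rfl
    intro i _
    rw [← mul_assoc, katoC_succ i, mul_assoc]
  have e2 : ∑ i ∈ Finset.range (n+1), ((-(1:ℝ)/2) - i) * (katoC i * katoC (n-i))
      = -(1/2) * katoA n - (∑ i ∈ Finset.range (n+1), (i:ℝ) * (katoC i * katoC (n-i))) := by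
    rw [katoA, Finset.mul_sum, ← Finset.sum_sub_distrib]
    exact Finset.sum_congr rfl (fun i _ => by ring)
  rw [e1, e2] at t1
  push_cast at t1
  have hm : ((n:ℝ)+1) ≠ 0 := by positivity
  have h4 : ((n:ℝ)+1) * katoA (n+1) = ((n:ℝ)+1) * (-katoA n) := by linarith
  exact mul_left_cancel₀ hm h4

lemma katoA_eq (n : ℕ) : katoA n = (-1)^n := by
  induction n with
  | zero => simpa using katoA_zero
  | succ n ih => rw [katoA_succ, ih, pow_succ]; ring

section RingLemmas
variable {A : Type*} [Ring A] (p q : A)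

lemma kato_UV (hp : p * p = p) (hq : q * q = q) :
    (q*p + (1-q)*(1-p)) * (p*q + (1-p)*(1-q)) = 1 - (q-p)*(q-p) := by
  have hp' : ∀ x : A, p * (p * x) = p * x := fun x => by rw [← mul_assoc, hp]
  have hq' : ∀ x : A, q * (q * x) = q * x := fun x => by rw [← mul_assoc, hq]
  simp only [mul_sub, sub_mul, mul_add, add_mul, mul_one, one_mul, mul_assoc, hp', hq', hp, hq]
  abel

lemma kato_QU (hp : p * p = p) (hq : q * q = q) :
    q * (q*p + (1-q)*(1-p)) = (q*p + (1-q)*(1-p)) * p := by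
  have hp' : ∀ x : A, p * (p * x) = p * x := fun x => by rw [← mul_assoc, hp]
  have hq' : ∀ x : A, q * (q * x) = q * x := fun x => by rw [← mul_assoc, hq]
  simp only [mul_sub, sub_mul, mul_add, add_mul, mul_one, one_mul, mul_assoc, hp', hq', hp, hq]
  abel

lemma kato_commRP (hp : p * p = p) (hq : q * q = q) :
    p * ((q-p)*(q-p)) = ((q-p)*(q-p)) * p := by
  have hp' : ∀ x : A, p * (p * x) = p * x := fun x => by rw [← mul_assoc, hp]
  have hq' : ∀ x : A, q * (q * x) = q * x := fun x => by rw [← mul_assoc, hq]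
  simp only [mul_sub, sub_mul, mul_add, add_mul, mul_one, one_mul, mul_assoc, hp', hq', hp, hq]
  abel

lemma kato_commRQ (hp : p * p = p) (hq : q * q = q) :
    q * ((q-p)*(q-p)) = ((q-p)*(q-p)) * q := by
  have hp' : ∀ x : A, p * (p * x) = p * x := fun x => by rw [← mul_assoc, hp]
  have hq' : ∀ x : A, q * (q * x) = q * x := fun x => by rw [← mul_assoc, hq]
  simp only [mul_sub, sub_mul, mul_add, add_mul, mul_one, one_mul, mul_assoc, hp', hq', hp, hq]
  abel

end RingLemmas

section Analytic
variable {A : Type*} [NormedRing A] [NormedAlgebra ℝ A]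

lemma kato_pow_le (r : A) (h1 : ‖(1:A)‖ ≤ 1) (k : ℕ) : ‖(-r)^k‖ ≤ ‖r‖^k := by
  induction k with
  | zero => simpa using h1
  | succ n ih =>
    calc ‖(-r)^(n+1)‖ = ‖(-r)^n * (-r)‖ := by rw [pow_succ]
      _ ≤ ‖(-r)^n‖ * ‖-r‖ := norm_mul_le _ _
      _ ≤ ‖r‖^n * ‖r‖ := by
          rw [norm_neg]
          exact mul_le_mul_of_nonneg_right ih (norm_nonneg r)
      _ = ‖r‖^(n+1) := (pow_succ _ _).symm

lemma kato_summable_norm (r : A) (hr : ‖r‖ < 1) (h1 : ‖(1:A)‖ ≤ 1) :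
    Summable fun k : ℕ => ‖katoC k • (-r)^k‖ := by
  apply Summable.of_nonneg_of_le (fun k => norm_nonneg _) (fun k => ?_)
    (summable_geometric_of_lt_one (norm_nonneg r) hr)
  calc ‖katoC k • (-r)^k‖ = |katoC k| * ‖(-r)^k‖ := by rw [norm_smul, Real.norm_eq_abs]
    _ ≤ 1 * ‖r‖^k :=
        mul_le_mul (abs_katoC_le_one k) (kato_pow_le r h1 k) (norm_nonneg _) zero_le_one
    _ = ‖r‖^k := one_mul _

variable [CompleteSpace A]

lemma kato_T_sq (r : A) (hr : ‖r‖ < 1) (h1 : ‖(1:A)‖ ≤ 1) :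
    (∑' k : ℕ, katoC k • (-r)^k) * (∑' k : ℕ, katoC k • (-r)^k) * (1 - r) = 1 := by
  have hs := kato_summable_norm r hr h1
  rw [tsum_mul_tsum_eq_tsum_sum_range_of_summable_norm hs hs]
  have hinner : ∀ n : ℕ,
      (∑ k ∈ Finset.range (n+1), (katoC k • (-r)^k) * (katoC (n-k) • (-r)^(n-k))) = r^n := by
    intro n
    have step : ∀ k ∈ Finset.range (n+1),
        (katoC k • (-r)^k) * (katoC (n-k) • (-r)^(n-k))
          = (katoC k * katoC (n-k)) • (-r)^n := by
      intro k hk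
      have hkn : k ≤ n := Nat.lt_succ_iff.mp (Finset.mem_range.mp hk)
      rw [smul_mul_assoc, mul_smul_comm, smul_smul, ← pow_add, Nat.add_sub_cancel' hkn]
    rw [Finset.sum_congr rfl step, ← Finset.sum_smul]
    have hA : (∑ k ∈ Finset.range (n+1), katoC k * katoC (n-k)) = (-1:ℝ)^n := katoA_eq n
    rw [hA]
    have hneg : (-r) = ((-1 : ℝ)) • r := by simp
    rw [hneg, smul_pow, smul_smul, ← mul_pow]
    norm_num
  rw [tsum_congr hinner]
  exact geom_series_mul_neg r hr

lemma kato_T_comm (r a : A) (hr : ‖r‖ < 1) (h1 : ‖(1:A)‖ ≤ 1) (hcomm : a * r = r * a) :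
    a * (∑' k : ℕ, katoC k • (-r)^k) = (∑' k : ℕ, katoC k • (-r)^k) * a := by
  have hs : Summable (fun k : ℕ => katoC k • (-r)^k) := (kato_summable_norm r hr h1).of_norm
  rw [← Summable.tsum_mul_left a hs, ← Summable.tsum_mul_right a hs]
  apply tsum_congr
  intro k
  have hc : Commute a ((-r)^k) := (Commute.neg_right hcomm).pow_right k
  rw [mul_smul_comm, smul_mul_assoc, hc.eq]

end Analytic

/-- Kato's similarity transformation for a pair of projections P, Q with
‖Q - P‖ < 1: with R = (Q-P)², T = (Id - R)^{-1/2} (binomial series) and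
U' = QP + (Id-Q)(Id-P), the operator U = T U' is invertible with inverse
(PQ + (Id-P)(Id-Q)) T, and U P U⁻¹ = Q. -/
theorem kato_similarity {X : Type*} [NormedAddCommGroup X] [NormedSpace ℝ X]
    [CompleteSpace X]
    (P Q : X →L[ℝ] X) (hP : P * P = P) (hQ : Q * Q = Q) (hPQ : ‖Q - P‖ < 1)
    (R : X →L[ℝ] X) (hR : R = (Q - P) * (Q - P))
    (T : X →L[ℝ] X)
    (hT : T = ∑' k : ℕ,
      ((∏ i ∈ Finset.range k, ((-(1 : ℝ)/2) - (i : ℝ))) / (k.factorial : ℝ)) • (-R) ^ k)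
    (U' U : X →L[ℝ] X)
    (hU' : U' = Q * P + (1 - Q) * (1 - P))
    (hU : U = T * U') :
    IsUnit (1 - R) ∧
    ∃ Uinv : X →L[ℝ] X, Uinv = (P * Q + (1 - P) * (1 - Q)) * T ∧
      U * Uinv = 1 ∧ Uinv * U = 1 ∧ U * P * Uinv = Q := by
  have hT' : T = ∑' k : ℕ, katoC k • (-R)^k := hT
  have hRnorm : ‖R‖ < 1 := by
    rw [hR]
    calc ‖(Q-P)*(Q-P)‖ ≤ ‖Q-P‖ * ‖Q-P‖ := norm_mul_le _ _
      _ < 1 := by nlinarith [norm_nonneg (Q-P)]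
  have h1 : ‖(1 : X →L[ℝ] X)‖ ≤ 1 := by
    rw [ContinuousLinearMap.one_def]; exact ContinuousLinearMap.norm_id_le
  set V' : X →L[ℝ] X := P * Q + (1 - P) * (1 - Q) with hV'
  -- commutation facts
  have hRP : P * R = R * P := by rw [hR]; exact kato_commRP P Q hP hQ
  have hRQ : Q * R = R * Q := by rw [hR]; exact kato_commRQ P Q hP hQ
  have cP : Commute R P := hRP.symm
  have cQ : Commute R Q := hRQ.symm
  have cU' : Commute R U' := by
    rw [hU']
    exact (cQ.mul_right cP).add_right
      (((Commute.one_right R).sub_right cQ).mul_right ((Commute.one_right R).sub_right cP))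
  have cV' : Commute R V' := by
    rw [hV']
    exact (cP.mul_right cQ).add_right
      (((Commute.one_right R).sub_right cP).mul_right ((Commute.one_right R).sub_right cQ))
  have hcommT : ∀ a : X →L[ℝ] X, a * R = R * a → a * T = T * a := fun a h => by
    rw [hT']; exact kato_T_comm R a hRnorm h1 h
  have hTsq : T * T * (1 - R) = 1 := by rw [hT']; exact kato_T_sq R hRnorm h1
  have hTU' : U' * T = T * U' := hcommT U' cU'.symm.eq
  have hTV' : V' * T = T * V' := hcommT V' cV'.symm.eq
  have hTQ : Q * T = T * Q := hcommT Q hRQ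
  have h1R : (1 - R) * T = T * (1 - R) := hcommT (1 - R) (by noncomm_ring)
  have hUV : U' * V' = 1 - R := by rw [hU', hV', hR]; exact kato_UV P Q hP hQ
  have hVU : V' * U' = 1 - R := by
    rw [hU', hV', hR]
    have h := kato_UV Q P hQ hP
    rw [h]
    congr 1
    noncomm_ring
  have hQU : Q * U' = U' * P := by rw [hU']; exact kato_QU P Q hP hQ
  constructor
  · exact ⟨Units.oneSub R hRnorm, rfl⟩
  refine ⟨V' * T, rfl, ?_, ?_, ?_⟩
  · -- U * (V' * T) = 1
    rw [hU]
    calc T * U' * (V' * T) = T * ((U' * V') * T) := by noncomm_ring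
      _ = T * ((1 - R) * T) := by rw [hUV]
      _ = T * (T * (1 - R)) := by rw [h1R]
      _ = T * T * (1 - R) := by noncomm_ring
      _ = 1 := hTsq
  · -- (V' * T) * U = 1
    rw [hU]
    calc V' * T * (T * U') = V' * T * (U' * T) := by rw [hTU']
      _ = V' * ((T * U') * T) := by noncomm_ring
      _ = V' * ((U' * T) * T) := by rw [hTU']
      _ = (V' * U') * (T * T) := by noncomm_ring
      _ = (1 - R) * (T * T) := by rw [hVU]
      _ = ((1 - R) * T) * T := by noncomm_ring
      _ = (T * (1 - R)) * T := by rw [h1R]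
      _ = T * ((1 - R) * T) := by noncomm_ring
      _ = T * (T * (1 - R)) := by rw [h1R]
      _ = T * T * (1 - R) := by noncomm_ring
      _ = 1 := hTsq
  · -- U * P * (V' * T) = Q
    rw [hU]
    calc T * U' * P * (V' * T) = T * ((U' * P) * (V' * T)) := by noncomm_ring
      _ = T * ((Q * U') * (V' * T)) := by rw [hQU]
      _ = (T * Q) * ((U' * V') * T) := by noncomm_ring
      _ = (T * Q) * ((1 - R) * T) := by rw [hUV]
      _ = (Q * T) * (T * (1 - R)) := by rw [← hTQ, h1R]
      _ = Q * (T * T * (1 - R)) := by noncomm_ring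
      _ = Q := by rw [hTsq, mul_one]
end
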